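/- Let γ ≥ 1, k ≥ 1, and let φ_1, ..., φ_t be vectors in R^k each with norm at most 1. Then log( det(γ I_k + sum_{τ=1}^t φ_τ φ_τ^T) / det(γ I_k) ) ≤ k * log(1 + t/(γ k)). -/

import Mathlib

/-!
Write `M = γ I + ∑ φ_τ φ_τᵀ`. It is positive definite, so AM-GM on its eigenvalues gives
`det M ≤ (tr M / k) ^ k`, and `tr M = γ k + ∑ ‖φ_τ‖² ≤ γ k + t`. Dividing by `det (γ I) = γ ^ k`
and taking logarithms gives the bound.
-/

open Matrix Finset

theorem Finset.prod_le_sum_div_card_pow {ι : Type*} (s : Finset ι) (z : ι → ℝ)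
    (hz : ∀ i ∈ s, 0 ≤ z i) : ∏ i ∈ s, z i ≤ ((∑ i ∈ s, z i) / #s) ^ #s := by
  rcases s.eq_empty_or_nonempty with rfl | hs
  · simp
  have hcard : (0 : ℝ) < #s := by exact_mod_cast hs.card_pos
  have amgm := Real.geom_mean_le_arith_mean s (fun _ ↦ 1) z (fun _ _ ↦ zero_le_one)
    (by simpa using hcard) hz
  simp only [Real.rpow_one, one_mul, sum_const, nsmul_eq_mul, mul_one] at amgm
  calc ∏ i ∈ s, z i = ((∏ i ∈ s, z i) ^ (#s : ℝ)⁻¹) ^ #s := by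
        rw [← Real.rpow_natCast, ← Real.rpow_mul (prod_nonneg hz), inv_mul_cancel₀ hcard.ne',
          Real.rpow_one]
    _ ≤ ((∑ i ∈ s, z i) / #s) ^ #s := by
        gcongr
        exact Real.rpow_nonneg (prod_nonneg hz) _

namespace Matrix

variable {n : Type*} [Fintype n]

theorem PosSemidef.det_le_trace_div_card_pow [DecidableEq n] {A : Matrix n n ℝ}
    (hA : A.PosSemidef) : A.det ≤ (A.trace / Fintype.card n) ^ Fintype.card n := by
  have hdet : A.det = ∏ i, hA.isHermitian.eigenvalues i := by
    simpa using hA.isHermitian.det_eq_prod_eigenvalues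
  have htr : A.trace = ∑ i, hA.isHermitian.eigenvalues i := by
    simpa using hA.isHermitian.trace_eq_sum_eigenvalues
  rw [hdet, htr]
  exact prod_le_sum_div_card_pow univ _ fun i _ ↦ hA.eigenvalues_nonneg i

theorem PosSemidef.det_smul_one_add_div_le [DecidableEq n] {γ t : ℝ} (hγ : 0 < γ)
    {S : Matrix n n ℝ} (hS : S.PosSemidef) (htr : S.trace ≤ t) :
    (γ • 1 + S).det / (γ • (1 : Matrix n n ℝ)).det
      ≤ (1 + t / (γ * Fintype.card n)) ^ Fintype.card n := by
  rcases isEmpty_or_nonempty n with hn | hn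
  · simp
  set k := Fintype.card n
  have hk : (0 : ℝ) < k := by exact_mod_cast Fintype.card_pos
  have hM : (γ • 1 + S).PosSemidef := (PosSemidef.one.smul hγ.le).add hS
  have htrM : (γ • 1 + S).trace ≤ γ * k + t := by
    rw [trace_add, trace_smul, trace_one, smul_eq_mul]
    linarith
  rw [det_smul, det_one, mul_one, div_le_iff₀ (by positivity), ← mul_pow]
  calc (γ • 1 + S).det ≤ ((γ • 1 + S).trace / k) ^ k := hM.det_le_trace_div_card_pow
    _ ≤ ((γ * k + t) / k) ^ k := by
        have := hM.trace_nonneg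
        gcongr
    _ = ((1 + t / (γ * k)) * γ) ^ k := by congr 1; field_simp

theorem posSemidef_sum_vecMulVec_self {ι : Type*} (s : Finset ι) (φ : ι → n → ℝ) :
    (∑ τ ∈ s, vecMulVec (φ τ) (φ τ)).PosSemidef :=
  posSemidef_sum s fun τ _ ↦ posSemidef_vecMulVec_self_star (φ τ)

theorem trace_sum_vecMulVec_self {ι : Type*} (s : Finset ι) (φ : ι → n → ℝ) :
    (∑ τ ∈ s, vecMulVec (φ τ) (φ τ)).trace = ∑ τ ∈ s, ∑ i, φ τ i ^ 2 := by
  simp [trace_sum, trace_vecMulVec, dotProduct, sq]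

end Matrix

theorem stmt2_general (k t : ℕ) (γ : ℝ) (hγ : 1 ≤ γ)
    (φ : Fin t → Fin k → ℝ) (hφ : ∀ τ, ∑ i, φ τ i ^ 2 ≤ 1) :
    Real.log ((γ • (1 : Matrix (Fin k) (Fin k) ℝ) + ∑ τ, vecMulVec (φ τ) (φ τ)).det
        / (γ • (1 : Matrix (Fin k) (Fin k) ℝ)).det)
      ≤ k * Real.log (1 + t / (γ * k)) := by
  have hγ0 : 0 < γ := by linarith
  have hS := posSemidef_sum_vecMulVec_self univ φ
  have htr : (∑ τ, vecMulVec (φ τ) (φ τ)).trace ≤ t := by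
    rw [trace_sum_vecMulVec_self]
    simpa using sum_le_sum (s := univ) fun τ _ ↦ hφ τ
  have hdet : 0 < (γ • (1 : Matrix (Fin k) (Fin k) ℝ) + ∑ τ, vecMulVec (φ τ) (φ τ)).det :=
    ((PosDef.one.smul hγ0).add_posSemidef hS).det_pos
  have hratio := hS.det_smul_one_add_div_le hγ0 htr
  rw [Fintype.card_fin] at hratio
  rw [← Real.log_pow]
  exact Real.log_le_log (div_pos hdet (by simpa [det_smul] using pow_pos hγ0 k)) hratio

theorem stmt2 (k t : ℕ) (hk : 1 ≤ k) (γ : ℝ) (hγ : 1 ≤ γ)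
    (φ : Fin t → Fin k → ℝ) (hφ : ∀ τ, ∑ i, φ τ i ^ 2 ≤ 1) :
    Real.log ((γ • (1 : Matrix (Fin k) (Fin k) ℝ) + ∑ τ, vecMulVec (φ τ) (φ τ)).det
        / (γ • (1 : Matrix (Fin k) (Fin k) ℝ)).det)
      ≤ k * Real.log (1 + t / (γ * k)) :=
  stmt2_general k t γ hγ φ hφ
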